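/- Let σ be a lock-well-formed execution, S a set of read/write events of σ, and e1, e2 events of σ with t1 = ThreadOf(e1) ≠ ThreadOf(e2). Suppose U′ : Threads(σ) → ℕ satisfies U′ ⊑ U(e2) and U(e1)(t1) ≤ U′(t1). Then Csmp(e1) ⊑ Csmp(e2). -/

import Mathlib

open scoped Classical

noncomputable section

/-- An operation: read/write of a memory location, or acquire/release of a lock. -/
inductive Op : Type where
  | read (x : ℕ)
  | write (x : ℕ)
  | acq (l : ℕ)
  | rel (l : ℕ)
  deriving DecidableEq

/-- An execution: a finite sequence of (pairwise-distinct) events, each with a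
thread identifier and an operation.  Events are identified with their index
in the sequence, so trace order is the order on `Fin n`. -/
structure Execution : Type where
  n : ℕ
  thread : Fin n → ℕ
  op : Fin n → Op

/-- `o` is a release operation. -/
def Op.isRel (o : Op) : Prop := ∃ l, o = Op.rel l

/-- `o` is a read or write operation. -/
def Op.isAccess (o : Op) : Prop := ∃ x, o = Op.read x ∨ o = Op.write x

/-- `o` accesses memory location `x`. -/
def Op.accesses (o : Op) (x : ℕ) : Prop := o = Op.read x ∨ o = Op.write x

namespace Execution

/-- Event `e` operates on lock `l`. -/
def touches (σ : Execution) (l : ℕ) (e : Fin σ.n) : Prop :=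
  σ.op e = Op.acq l ∨ σ.op e = Op.rel l

/-- Lock-well-formedness: for every lock `l`, the subsequence of events on `l`
alternates acquires and releases beginning with an acquire (an event on `l` is
an acquire iff an even number of events on `l` precede it), and each release of
`l` is performed by the same thread as the immediately preceding acquire of `l`. -/
def LockWellFormed (σ : Execution) : Prop :=
  ∀ l : ℕ, ∀ e : Fin σ.n, σ.touches l e →
    ((σ.op e = Op.acq l ↔
        Even ((Finset.univ.filter (fun f => f < e ∧ σ.touches l f)).card)) ∧
     (σ.op e = Op.rel l →
        ∃ f : Fin σ.n, f < e ∧ σ.op f = Op.acq l ∧ σ.thread f = σ.thread e ∧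
          ∀ g : Fin σ.n, f < g → g < e → ¬ σ.touches l g))

/-- Nonstrict thread order `e1 ≤tho e2`. -/
def tho (σ : Execution) (e1 e2 : Fin σ.n) : Prop :=
  e1 ≤ e2 ∧ σ.thread e1 = σ.thread e2

/-- Strict thread order `e1 <tho e2`. -/
def sTho (σ : Execution) (e1 e2 : Fin σ.n) : Prop :=
  e1 < e2 ∧ σ.thread e1 = σ.thread e2

/-- One step of happens-before: thread order, or a release–acquire edge. -/
def hbStep (σ : Execution) (e1 e2 : Fin σ.n) : Prop :=
  σ.tho e1 e2 ∨ (e1 < e2 ∧ ∃ l, σ.op e1 = Op.rel l ∧ σ.op e2 = Op.acq l)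

/-- Happens-before: reflexive-transitive closure of thread order together
with release–acquire edges. -/
def hb (σ : Execution) : Fin σ.n → Fin σ.n → Prop :=
  Relation.ReflTransGen σ.hbStep

/-- The (finite) set of threads of the events of `σ`. -/
def threads (σ : Execution) : Finset ℕ :=
  Finset.univ.image σ.thread

/-- Local time `Lft(e)`: 1 plus the number of release events thread-order
before `e`. -/
def Lft (σ : Execution) (e : Fin σ.n) : ℕ :=
  (Finset.univ.filter (fun f => (σ.op f).isRel ∧ σ.sTho f e)).card + 1

/-- FastTrack timestamp `Cft(e)(t)`: max of `Lft(f)` over events `f` of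
thread `t` with `f ≤HB e` (0 if there are none). -/
def Cft (σ : Execution) (e : Fin σ.n) (t : ℕ) : ℕ :=
  (Finset.univ.filter (fun f => σ.thread f = t ∧ σ.hb f e)).sup σ.Lft

/-- `T1 ⊑ T2`: pointwise comparison over the threads of `σ`. -/
def VCle (σ : Execution) (T1 T2 : ℕ → ℕ) : Prop :=
  ∀ t ∈ σ.threads, T1 t ≤ T2 t

/-- `(e1, e2)` is a conflicting pair (with `e1 <tr e2`). -/
def Conflicting (σ : Execution) (e1 e2 : Fin σ.n) : Prop :=
  e1 < e2 ∧ σ.thread e1 ≠ σ.thread e2 ∧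
    ∃ x, (σ.op e1).accesses x ∧ (σ.op e2).accesses x ∧
      (σ.op e1 = Op.write x ∨ σ.op e2 = Op.write x)

/-- `(e1, e2)` is an HB-race. -/
def HBRace (σ : Execution) (e1 e2 : Fin σ.n) : Prop :=
  σ.Conflicting e1 e2 ∧ ¬ σ.hb e1 e2

/-- `RelAfter S`: release events that are the first release after some
sampled event, in the same thread. -/
def RelAfter (σ : Execution) (S : Finset (Fin σ.n)) : Finset (Fin σ.n) :=
  Finset.univ.filter (fun f => (σ.op f).isRel ∧
    ∃ e ∈ S, σ.sTho e f ∧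
      ∀ g : Fin σ.n, (σ.op g).isRel → σ.sTho e g → ¬ σ.sTho g f)

/-- Sampling local time `Lsmp(e)`: 1 plus the number of events of `RelAfter S`
thread-order before `e`. -/
def Lsmp (σ : Execution) (S : Finset (Fin σ.n)) (e : Fin σ.n) : ℕ :=
  ((σ.RelAfter S).filter (fun f => σ.sTho f e)).card + 1

/-- Sampling timestamp `Csmp(e)(t)`: max of `Lsmp(f)` over sampled events `f`
of thread `t` with `f ≤HB e` (0 if there are none). -/
def Csmp (σ : Execution) (S : Finset (Fin σ.n)) (e : Fin σ.n) (t : ℕ) : ℕ :=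
  (S.filter (fun f => σ.thread f = t ∧ σ.hb f e)).sup (σ.Lsmp S)

/-- `Csmp⁻(f)`: the sampling timestamp of the immediate thread-order
predecessor of `f`, or the all-zero timestamp if `f` is the first event of
its thread. -/
def CsmpPrev (σ : Execution) (S : Finset (Fin σ.n)) (f : Fin σ.n) : ℕ → ℕ :=
  if h : ∃ f' : Fin σ.n, σ.sTho f' f ∧ ∀ g : Fin σ.n, σ.sTho f' g → ¬ σ.sTho g f
  then σ.Csmp S h.choose
  else fun _ => 0

/-- `VT(e)`: total number of component updates of the sampling timestamp along
the thread of `e`, up to and including `e`. -/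
def VT (σ : Execution) (S : Finset (Fin σ.n)) (e : Fin σ.n) : ℕ :=
  ∑ f ∈ Finset.univ.filter (fun f => σ.tho f e),
    ((σ.threads).filter (fun t => σ.Csmp S f t ≠ σ.CsmpPrev S f t)).card

/-- Freshness timestamp `U(e)(t)`: max of `VT(f)` over events `f` of thread
`t` with `f ≤HB e` (0 if there are none). -/
def Ufr (σ : Execution) (S : Finset (Fin σ.n)) (e : Fin σ.n) (t : ℕ) : ℕ :=
  (Finset.univ.filter (fun f => σ.thread f = t ∧ σ.hb f e)).sup (σ.VT S)

end Execution

/-!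
Let `t₁` be the thread of `e₁`. The hypotheses give `VT(e₁) ≤ U(e₂)(t₁)`, so `VT(e₁)` is at
most `VT(f)` for the latest event `f` of `t₁` that happens before `e₂` (or `0` if there is
none). Since `VT` only grows along a thread, by the number of component updates, no event of
`t₁` up to `e₁` that does not happen before `e₂` updates the sampling timestamp. Walking back
along `t₁` from `e₁` therefore leaves `Csmp` unchanged until an event happening before `e₂` is
reached (whose timestamp is below `Csmp(e₂)`), or the start of the thread (timestamp zero).
-/

namespace Execution

variable (σ : Execution) (S : Finset (Fin σ.n))

def updateCount (g : Fin σ.n) : ℕ :=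
  (σ.threads.filter (fun t => σ.Csmp S g t ≠ σ.CsmpPrev S g t)).card

variable {σ}

lemma tho_trans {a b c : Fin σ.n} (hab : σ.tho a b) (hbc : σ.tho b c) : σ.tho a c :=
  ⟨hab.1.trans hbc.1, hab.2.trans hbc.2⟩

lemma hb_of_tho {a b : Fin σ.n} (h : σ.tho a b) : σ.hb a b :=
  Relation.ReflTransGen.single (Or.inl h)

lemma Csmp_le_of_hb {a b : Fin σ.n} (h : σ.hb a b) (t : ℕ) : σ.Csmp S a t ≤ σ.Csmp S b t :=
  Finset.sup_mono fun _ hf => by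
    simp only [Finset.mem_filter] at hf ⊢
    exact ⟨hf.1, hf.2.1, hf.2.2.trans h⟩

lemma CsmpPrev_eq_zero_or_exists (e : Fin σ.n) :
    σ.CsmpPrev S e = 0 ∨ ∃ p, σ.sTho p e ∧ σ.CsmpPrev S e = σ.Csmp S p := by
  unfold CsmpPrev
  split
  case isTrue h => exact Or.inr ⟨h.choose, h.choose_spec.1, rfl⟩
  case isFalse => exact Or.inl rfl

lemma updateCount_eq_zero_iff {g : Fin σ.n} :
    σ.updateCount S g = 0 ↔ ∀ t ∈ σ.threads, σ.Csmp S g t = σ.CsmpPrev S g t := by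
  simp [updateCount, Finset.filter_eq_empty_iff]

lemma updateCount_le_VT {g e : Fin σ.n} (hge : σ.tho g e) : σ.updateCount S g ≤ σ.VT S e :=
  Finset.single_le_sum (f := σ.updateCount S) (fun _ _ => Nat.zero_le _)
    (Finset.mem_filter.mpr ⟨Finset.mem_univ _, hge⟩)

lemma VT_add_updateCount_le {f g e : Fin σ.n} (hfe : σ.tho f e) (hfg : f < g)
    (hge : σ.tho g e) : σ.VT S f + σ.updateCount S g ≤ σ.VT S e := by
  have hg : g ∉ Finset.univ.filter (fun x => σ.tho x f) := by
    simpa using fun hgf : σ.tho g f => hgf.1.not_gt hfg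
  calc σ.VT S f + σ.updateCount S g
      = ∑ x ∈ insert g (Finset.univ.filter (fun x => σ.tho x f)), σ.updateCount S x := by
        rw [Finset.sum_insert hg, add_comm]; rfl
    _ ≤ σ.VT S e := by
        refine Finset.sum_le_sum_of_subset (Finset.insert_subset ?_ fun x hx => ?_)
        · simpa using hge
        · simp only [Finset.mem_filter, Finset.mem_univ, true_and] at hx ⊢
          exact tho_trans hx hfe

/-- Every event of the thread of `e` that happens before `e'` precedes `g` (otherwise `g` would
happen before `e'` too), so its `VT` misses the update at `g` that `VT e` counts. -/
lemma Ufr_add_updateCount_le {g e e' : Fin σ.n} (hge : σ.tho g e) (hg : ¬ σ.hb g e') :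
    σ.Ufr S e' (σ.thread e) + σ.updateCount S g ≤ σ.VT S e := by
  suffices σ.Ufr S e' (σ.thread e) ≤ σ.VT S e - σ.updateCount S g by
    have := updateCount_le_VT S hge
    omega
  refine Finset.sup_le fun f hf => ?_
  simp only [Finset.mem_filter, Finset.mem_univ, true_and] at hf
  have hfg : f < g := lt_of_not_ge fun hgf =>
    hg ((hb_of_tho ⟨hgf, hge.2.trans hf.1.symm⟩).trans hf.2)
  have := VT_add_updateCount_le S ⟨(hfg.trans_le hge.1).le, hf.1⟩ hfg hge
  omega

lemma Csmp_le_of_updateCount_eq_zero {e' : Fin σ.n} (e : Fin σ.n)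
    (hupd : ∀ g, σ.tho g e → ¬ σ.hb g e' → σ.updateCount S g = 0) :
    ∀ t ∈ σ.threads, σ.Csmp S e t ≤ σ.Csmp S e' t := by
  induction e using WellFoundedLT.induction with
  | ind e ih =>
    intro t ht
    by_cases he : σ.hb e e'
    · exact Csmp_le_of_hb S he t
    rw [(updateCount_eq_zero_iff S).mp (hupd e ⟨le_rfl, rfl⟩ he) t ht]
    rcases CsmpPrev_eq_zero_or_exists S e with h0 | ⟨p, hpe, hp⟩
    · simp [h0]
    · rw [hp]
      exact ih p hpe.1 (fun g hgp => hupd g (tho_trans hgp ⟨hpe.1.le, hpe.2⟩)) t ht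

end Execution

theorem stmt19_general (σ : Execution)
    (S : Finset (Fin σ.n))
    (e1 e2 : Fin σ.n)
    (U' : ℕ → ℕ) (hU1 : σ.VCle U' (σ.Ufr S e2))
    (hU2 : σ.Ufr S e1 (σ.thread e1) ≤ U' (σ.thread e1)) :
    σ.VCle (σ.Csmp S e1) (σ.Csmp S e2) := by
  have hVT : σ.VT S e1 ≤ σ.Ufr S e2 (σ.thread e1) :=
    calc σ.VT S e1 ≤ σ.Ufr S e1 (σ.thread e1) :=
          Finset.le_sup (Finset.mem_filter.mpr ⟨Finset.mem_univ _, rfl, .refl⟩)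
      _ ≤ U' (σ.thread e1) := hU2
      _ ≤ σ.Ufr S e2 (σ.thread e1) := hU1 _ (Finset.mem_image_of_mem _ (Finset.mem_univ e1))
  refine Execution.Csmp_le_of_updateCount_eq_zero S e1 fun g hg hgb => ?_
  have := Execution.Ufr_add_updateCount_le S hg hgb
  omega

/-- For events `e1, e2` of different threads with
`t1 = ThreadOf e1`, if `U' ⊑ U(e2)` and `U(e1)(t1) ≤ U'(t1)`, then
`Csmp(e1) ⊑ Csmp(e2)`. -/
theorem stmt19 (σ : Execution) (hwf : σ.LockWellFormed)
    (S : Finset (Fin σ.n)) (hS : ∀ e ∈ S, (σ.op e).isAccess)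
    (e1 e2 : Fin σ.n) (hne : σ.thread e1 ≠ σ.thread e2)
    (U' : ℕ → ℕ) (hU1 : σ.VCle U' (σ.Ufr S e2))
    (hU2 : σ.Ufr S e1 (σ.thread e1) ≤ U' (σ.thread e1)) :
    σ.VCle (σ.Csmp S e1) (σ.Csmp S e2) :=
  stmt19_general σ S e1 e2 U' hU1 hU2
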